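/- arXiv:1210.6722 — 3 statements merged into one kernel-verified Lean document; each statement's English description precedes it below -/
import Mathlib

section
/- Let G, H, U be bases of F_q^n with g_i · h_j = δ_{i,n-j+1}. Then the following two statements are equivalent: (1) ρ̄_G(g_i ∗ u_j) = k and (i,j) is well-behaving with respect to (G,U); (2) ρ̄_H(h_{n-k+1} ∗ u_j) = n-i+1 and (n-k+1, j) is well-behaving with respect to (H,U). -/
def Lspan (F : Type*) [Field F] {n : ℕ} (b : Fin n → Fin n → F) (l : ℕ) :
    Submodule F (Fin n → F) :=
  Submodule.span F (b '' {i | (i : ℕ) < l})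

noncomputable def rho (F : Type*) [Field F] {n : ℕ} (b : Fin n → Fin n → F)
    (v : Fin n → F) : ℕ :=
  sInf {l | v ∈ Lspan F b l}

def IsBasisFam (F : Type*) [Field F] {n : ℕ} (b : Fin n → Fin n → F) : Prop :=
  LinearIndependent F b ∧ Submodule.span F (Set.range b) = ⊤

def WB (F : Type*) [Field F] {n : ℕ} (b u : Fin n → Fin n → F) (i j : Fin n) : Prop :=
  ∀ i' j' : Fin n, i' ≤ i → j' ≤ j → (i', j') ≠ (i, j) →
    rho F b (b i' * u j') < rho F b (b i * u j)

def WWB (F : Type*) [Field F] {n : ℕ} (b u : Fin n → Fin n → F) (i j : Fin n) : Prop :=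
  (∀ i' : Fin n, i' < i → rho F b (b i' * u j) < rho F b (b i * u j)) ∧
  (∀ j' : Fin n, j' < j → rho F b (b i * u j') < rho F b (b i * u j))

def OWB (F : Type*) [Field F] {n : ℕ} (b u : Fin n → Fin n → F) (i j : Fin n) : Prop :=
  ∀ i' : Fin n, i' < i → rho F b (b i' * u j) < rho F b (b i * u j)

def LambdaWB (F : Type*) [Field F] {n : ℕ} (b u : Fin n → Fin n → F) (i : Fin n) : Set ℕ :=
  {l | ∃ j : Fin n, WB F b u i j ∧ rho F b (b i * u j) = l}

def LambdaOWB (F : Type*) [Field F] {n : ℕ} (b u : Fin n → Fin n → F) (i : Fin n) : Set ℕ :=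
  {l | ∃ j : Fin n, OWB F b u i j ∧ rho F b (b i * u j) = l}

noncomputable def sigmaWB (F : Type*) [Field F] {n : ℕ} (b u : Fin n → Fin n → F)
    (i : Fin n) : ℕ :=
  (LambdaWB F b u i).ncard

noncomputable def sigmaOWB (F : Type*) [Field F] {n : ℕ} (b u : Fin n → Fin n → F)
    (i : Fin n) : ℕ :=
  (LambdaOWB F b u i).ncard

def VWB (F : Type*) [Field F] {n : ℕ} (b u : Fin n → Fin n → F) (l : ℕ) : Set (Fin n) :=
  {i | ∃ j : Fin n, WB F b u i j ∧ rho F b (b i * u j) = l}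

def VOWB (F : Type*) [Field F] {n : ℕ} (b u : Fin n → Fin n → F) (l : ℕ) : Set (Fin n) :=
  {i | ∃ j : Fin n, OWB F b u i j ∧ rho F b (b i * u j) = l}

noncomputable def muWB (F : Type*) [Field F] {n : ℕ} (b u : Fin n → Fin n → F)
    (l : ℕ) : ℕ :=
  (VWB F b u l).ncard

noncomputable def muOWB (F : Type*) [Field F] {n : ℕ} (b u : Fin n → Fin n → F)
    (l : ℕ) : ℕ :=
  (VOWB F b u l).ncard

noncomputable def hwt {F : Type*} [Field F] {n : ℕ} (v : Fin n → F) : ℕ :=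
  Set.ncard {i | v i ≠ 0}

/-!
If `h` is the reversed dual basis of `g`, then `ρ̄_G(v) ≤ l` exactly when `v` is orthogonal to
`h_1, …, h_{n-l}`. Hence "`ρ̄_G(g_i ∗ u_j) = k` and `(i, j)` is well-behaving" says that the
trilinear form `T(a, b, c) = (g_a ∗ u_b) ⬝ᵥ h_c` vanishes on the box below `(i, j, n-k+1)` except
at that corner, where it is nonzero. Since `(g_a ∗ u_b) ⬝ᵥ h_c = (h_c ∗ u_b) ⬝ᵥ g_a`, this
condition is symmetric under exchanging `g` and `h`, and the first and third coordinates.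
-/

theorem mul_dotProduct_comm {F ι : Type*} [CommSemiring F] [Fintype ι] (a b c : ι → F) :
    (a * c) ⬝ᵥ b = (b * c) ⬝ᵥ a := by
  simp only [dotProduct, Pi.mul_apply]
  exact Finset.sum_congr rfl fun _ _ => by ring

def IsBoxCorner {α β γ M : Type*} [LE α] [LE β] [LE γ] [Zero M] (T : α → β → γ → M)
    (a : α) (b : β) (c : γ) : Prop :=
  T a b c ≠ 0 ∧ ∀ a' ≤ a, ∀ b' ≤ b, ∀ c' ≤ c, T a' b' c' ≠ 0 → a' = a ∧ b' = b ∧ c' = c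

section IsBoxCorner

variable {α β γ M : Type*} [Zero M]

theorem isBoxCorner_swap [LE α] [LE β] [LE γ] (T : α → β → γ → M) (a : α) (b : β) (c : γ) :
    IsBoxCorner T a b c ↔ IsBoxCorner (fun c b a => T a b c) c b a :=
  ⟨fun ⟨hne, hbox⟩ => ⟨hne, fun c' hc b' hb a' ha hT =>
      let ⟨ha', hb', hc'⟩ := hbox a' ha b' hb c' hc hT; ⟨hc', hb', ha'⟩⟩,
    fun ⟨hne, hbox⟩ => ⟨hne, fun a' ha b' hb c' hc hT =>
      let ⟨hc', hb', ha'⟩ := hbox c' hc b' hb a' ha hT; ⟨ha', hb', hc'⟩⟩⟩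

theorem isBoxCorner_iff [Preorder α] [Preorder β] [PartialOrder γ] (T : α → β → γ → M)
    (a : α) (b : β) (c : γ) :
    IsBoxCorner T a b c ↔ (T a b c ≠ 0 ∧ ∀ c' < c, T a b c' = 0) ∧
      ∀ a' ≤ a, ∀ b' ≤ b, (a', b') ≠ (a, b) → ∀ c' ≤ c, T a' b' c' = 0 := by
  constructor
  · rintro ⟨hne, hbox⟩
    refine ⟨⟨hne, fun c' hc => ?_⟩, fun a' ha b' hb hab c' hc => ?_⟩
    · by_contra hT
      exact hc.ne (hbox a le_rfl b le_rfl c' hc.le hT).2.2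
    · by_contra hT
      obtain ⟨rfl, rfl, -⟩ := hbox a' ha b' hb c' hc hT
      exact hab rfl
  · rintro ⟨⟨hne, hcol⟩, hbox⟩
    refine ⟨hne, fun a' ha b' hb c' hc hT => ?_⟩
    by_cases hab : (a', b') = (a, b)
    · obtain ⟨rfl, rfl⟩ := Prod.ext_iff.mp hab
      exact ⟨rfl, rfl, hc.eq_or_lt.resolve_right fun hlt => hT (hcol c' hlt)⟩
    · exact absurd (hbox a' ha b' hb hab c' hc) hT

end IsBoxCorner

section Rho

variable {F : Type*} [Field F] {n : ℕ}

def IsReversedDual (g h : Fin n → Fin n → F) : Prop :=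
  ∀ i j : Fin n, g i ⬝ᵥ h j = if (i : ℕ) + (j : ℕ) + 1 = n then 1 else 0

theorem IsReversedDual.symm {g h : Fin n → Fin n → F} (hGH : IsReversedDual g h) :
    IsReversedDual h g := fun i j => by
  rw [dotProduct_comm, hGH, add_comm (j : ℕ)]

theorem Lspan_mono (b : Fin n → Fin n → F) {l l' : ℕ} (hl : l ≤ l') :
    Lspan F b l ≤ Lspan F b l' :=
  Submodule.span_mono (Set.image_mono fun _ hi => lt_of_lt_of_le hi hl)

theorem Lspan_eq_top {b : Fin n → Fin n → F} (hb : Submodule.span F (Set.range b) = ⊤) :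
    Lspan F b n = ⊤ := by
  rw [Lspan, show {i : Fin n | (i : ℕ) < n} = Set.univ from Set.eq_univ_of_forall Fin.is_lt,
    Set.image_univ, hb]

theorem rho_le_iff_mem_Lspan {b : Fin n → Fin n → F}
    (hb : Submodule.span F (Set.range b) = ⊤) (v : Fin n → F) (l : ℕ) :
    rho F b v ≤ l ↔ v ∈ Lspan F b l := by
  have hne : {l | v ∈ Lspan F b l}.Nonempty := ⟨n, by simp [Lspan_eq_top hb]⟩
  exact ⟨fun hle => Lspan_mono b hle (Nat.sInf_mem hne), fun hv => Nat.sInf_le hv⟩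

variable {g h : Fin n → Fin n → F}

theorem basis_repr_eq_dotProduct_rev (hg : IsBasisFam F g) (hGH : IsReversedDual g h)
    (v : Fin n → F) (a : Fin n) :
    (Module.Basis.mk hg.1 hg.2.ge).repr v a = v ⬝ᵥ h a.rev := by
  set B := Module.Basis.mk hg.1 hg.2.ge
  have hpair : ∀ b : Fin n, g b ⬝ᵥ h a.rev = if a = b then 1 else 0 := fun b => by
    rw [hGH, Fin.val_rev]
    exact if_congr (by rw [Fin.ext_iff]; omega) rfl rfl
  conv_rhs => rw [← B.sum_repr v]
  simp only [sum_dotProduct, smul_dotProduct, Module.Basis.mk_apply, B, hpair, smul_eq_mul,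
    mul_ite, mul_one, mul_zero, Finset.sum_ite_eq, Finset.mem_univ, if_true]

theorem mem_Lspan_iff_dotProduct (hg : IsBasisFam F g) (hGH : IsReversedDual g h)
    (v : Fin n → F) (l : ℕ) :
    v ∈ Lspan F g l ↔ ∀ c : Fin n, (c : ℕ) + l < n → v ⬝ᵥ h c = 0 := by
  rw [Lspan, ← Module.Basis.coe_mk hg.1 hg.2.ge, Module.Basis.mem_span_image]
  conv_rhs => rw [Fin.rev_surjective.forall]
  simp only [Set.subset_def, Finset.mem_coe, Finsupp.mem_support_iff, Set.mem_ofPred_eq,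
    basis_repr_eq_dotProduct_rev hg hGH, Fin.val_rev]
  refine forall_congr' fun a => ?_
  rw [show n - (a + 1) + l < n ↔ ¬(a : ℕ) < l by omega, not_imp_comm]

theorem rho_le_iff_dotProduct (hg : IsBasisFam F g) (hGH : IsReversedDual g h)
    (v : Fin n → F) (l : ℕ) :
    rho F g v ≤ l ↔ ∀ c : Fin n, (c : ℕ) + l < n → v ⬝ᵥ h c = 0 :=
  (rho_le_iff_mem_Lspan hg.2 v l).trans (mem_Lspan_iff_dotProduct hg hGH v l)

theorem rho_lt_iff_dotProduct (hg : IsBasisFam F g) (hGH : IsReversedDual g h)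
    {m : Fin n} {k : ℕ} (hmk : (m : ℕ) + k = n) (v : Fin n → F) :
    rho F g v < k ↔ ∀ c ≤ m, v ⬝ᵥ h c = 0 := by
  rw [Nat.lt_iff_le_pred (by omega), rho_le_iff_dotProduct hg hGH]
  exact forall_congr' fun c => imp_congr (by rw [Fin.le_def]; omega) Iff.rfl

theorem rho_eq_iff_dotProduct (hg : IsBasisFam F g) (hGH : IsReversedDual g h)
    {m : Fin n} {k : ℕ} (hmk : (m : ℕ) + k = n) (v : Fin n → F) :
    rho F g v = k ↔ v ⬝ᵥ h m ≠ 0 ∧ ∀ c < m, v ⬝ᵥ h c = 0 := by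
  have hle : rho F g v ≤ k ↔ ∀ c < m, v ⬝ᵥ h c = 0 := by
    rw [rho_le_iff_dotProduct hg hGH]
    exact forall_congr' fun c => imp_congr (by rw [Fin.lt_def]; omega) Iff.rfl
  rw [eq_iff_le_not_lt, hle, rho_lt_iff_dotProduct hg hGH hmk]
  constructor
  · rintro ⟨hbelow, hnot⟩
    exact ⟨fun hm => hnot fun c hc => hc.eq_or_lt.elim (· ▸ hm) (hbelow c), hbelow⟩
  · rintro ⟨hm, hbelow⟩
    exact ⟨hbelow, fun hall => hm (hall m le_rfl)⟩

theorem rho_eq_and_WB_iff_isBoxCorner (hg : IsBasisFam F g) (hGH : IsReversedDual g h)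
    (u : Fin n → Fin n → F) {i j m : Fin n} {k : ℕ} (hmk : (m : ℕ) + k = n) :
    (rho F g (g i * u j) = k ∧ WB F g u i j) ↔
      IsBoxCorner (fun a b c => (g a * u b) ⬝ᵥ h c) i j m := by
  rw [isBoxCorner_iff, ← rho_eq_iff_dotProduct hg hGH hmk]
  constructor
  · rintro ⟨hρ, hwb⟩
    exact ⟨hρ, fun a ha b hb hab =>
      (rho_lt_iff_dotProduct hg hGH hmk _).1 (hρ ▸ hwb a b ha hb hab)⟩
  · rintro ⟨hρ, hbox⟩
    exact ⟨hρ, fun a b ha hb hab =>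
      hρ ▸ (rho_lt_iff_dotProduct hg hGH hmk _).2 (hbox a ha b hb hab)⟩

end Rho

theorem stmt5 {F : Type*} [Field F] {n : ℕ} (g h u : Fin n → Fin n → F)
    (hg : IsBasisFam F g) (hh : IsBasisFam F h)
    (hGH : ∀ i j : Fin n,
      dotProduct (g i) (h j) = if (i : ℕ) + (j : ℕ) + 1 = n then 1 else 0)
    (i j : Fin n) (k : ℕ) (hk1 : 1 ≤ k) (hk2 : k ≤ n) :
    (rho F g (g i * u j) = k ∧ WB F g u i j) ↔
      (rho F h (h ⟨n - k, by omega⟩ * u j) = n - (i : ℕ) ∧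
        WB F h u ⟨n - k, by omega⟩ j) := by
  rw [rho_eq_and_WB_iff_isBoxCorner hg hGH u (m := ⟨n - k, by omega⟩) (by simp only; omega),
    rho_eq_and_WB_iff_isBoxCorner hh (IsReversedDual.symm hGH) u (m := i) (by omega),
    isBoxCorner_swap]
  simp only [mul_dotProduct_comm (g _)]
end

section
/- Let R be an F_q-algebra with weight function ρ : R → Γ ∪ {−∞} and φ : R → F_q^n a surjective F_q-algebra morphism (φ linear, φ(fg) = φ(f) ∗ φ(g)). Let Δ(R,ρ,φ) = {α(1), ..., α(n)} be defined recursively by α(1) = 0 and α(i) the smallest element of Γ greater than α(1),...,α(i−1) with φ(R_γ) ⊊ φ(R_{α(i)}) for all γ ≺ α(i). Then B = {φ(f_{α(1)}), ..., φ(f_{α(n)})} is a basis of F_q^n, where f_{α(i)} ∈ R satisfies ρ(f_{α(i)}) = α(i). -/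
structure MonOrd (r : ℕ) where
  lt : (Fin r → ℕ) → (Fin r → ℕ) → Prop
  irrefl : ∀ a, ¬ lt a a
  trans : ∀ a b c, lt a b → lt b c → lt a c
  total : ∀ a b, lt a b ∨ a = b ∨ lt b a
  zero_le : ∀ a, a = 0 ∨ lt 0 a
  add_right : ∀ a b c, lt a b → lt (a + c) (b + c)

def MonOrd.wlt {r : ℕ} (mo : MonOrd r)
    (x y : WithBot (Fin r → ℕ)) : Prop :=
  (x = ⊥ ∧ y ≠ ⊥) ∨ ∃ a b : Fin r → ℕ, x = ↑a ∧ y = ↑b ∧ mo.lt a b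

def MonOrd.wle {r : ℕ} (mo : MonOrd r)
    (x y : WithBot (Fin r → ℕ)) : Prop :=
  mo.wlt x y ∨ x = y

structure WeightFunction (Fq R : Type*) [Field Fq] [CommRing R] [Algebra Fq R]
    (r : ℕ) where
  mo : MonOrd r
  Γ : Set (Fin r → ℕ)
  add_mem : ∀ a ∈ Γ, ∀ b ∈ Γ, a + b ∈ Γ
  rho : R → WithBot (Fin r → ℕ)
  surj : ∀ γ ∈ Γ, ∃ f : R, rho f = ↑γ
  mem_Γ : ∀ f : R, rho f ≠ ⊥ → ∃ γ ∈ Γ, rho f = ↑γ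
  W0 : ∀ f : R, rho f = ⊥ ↔ f = 0
  W1 : ∀ (a : Fq) (f : R), a ≠ 0 → rho (a • f) = rho f
  W2a : ∀ f g : R, mo.wle (rho (f + g)) (rho f) ∨ mo.wle (rho (f + g)) (rho g)
  W2b : ∀ f g : R, mo.wlt (rho f) (rho g) → rho (f + g) = rho g
  W3 : ∀ f g h : R, mo.wlt (rho f) (rho g) → h ≠ 0 →
    mo.wlt (rho (f * h)) (rho (g * h))
  W4 : ∀ f g : R, f ≠ 0 → g ≠ 0 → rho f = rho g →
    ∃ a : Fq, a ≠ 0 ∧ mo.wlt (rho (f - a • g)) (rho g)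
  W5 : ∀ f g : R, f ≠ 0 → g ≠ 0 → ∀ γ δ : Fin r → ℕ,
    rho f = ↑γ → rho g = ↑δ → rho (f * g) = ↑(γ + δ)

def Rsub {Fq R : Type*} [Field Fq] [CommRing R] [Algebra Fq R] {r : ℕ}
    (W : WeightFunction Fq R r) (γ : Fin r → ℕ) : Set R :=
  {h : R | W.mo.wle (W.rho h) ↑γ}

def IsJump {Fq R : Type*} [Field Fq] [CommRing R] [Algebra Fq R] {r n : ℕ}
    (W : WeightFunction Fq R r) (φ : R → Fin n → Fq) (η : Fin r → ℕ) : Prop :=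
  η ∈ W.Γ ∧ ∀ γ ∈ W.Γ, W.mo.lt γ η → φ '' Rsub W γ ⊂ φ '' Rsub W η

/-!
Every element of `φ(R)` is reached by descending along `≺`: write `ρ(h) = δ`. If `δ` is some
`α(j)`, then (W.4) lowers the weight of `h` by subtracting a multiple of `f_{α(j)}`; otherwise `δ`
is not a jump, so `φ(R_δ) = φ(R_γ)` for some `γ ≺ δ` and `φ(h)` is the image of an element of
smaller weight. Since `≺` is a well-order, this shows that the `n` vectors `φ(f_{α(i)})` span
`F_q^n`, hence form a basis.
-/

namespace MonOrd

variable {r : ℕ} (mo : MonOrd r)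

lemma eq_or_lt_of_le {a b : Fin r → ℕ} (h : a ≤ b) : a = b ∨ mo.lt a b := by
  have hba : b - a + a = b := tsub_add_cancel_of_le h
  rcases mo.zero_le (b - a) with h0 | h0
  · left
    rw [← hba, h0, zero_add]
  · right
    simpa only [zero_add, hba] using mo.add_right 0 (b - a) a h0

/-- Dickson's lemma: a monomial ordering is a well-ordering. -/
lemma wellFounded : WellFounded mo.lt := by
  have : IsStrictOrder (Fin r → ℕ) mo.lt := { irrefl := mo.irrefl, trans := mo.trans }
  rw [RelEmbedding.wellFounded_iff_isEmpty]
  refine ⟨fun g => ?_⟩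
  obtain ⟨m, k, hmk, hle⟩ := wellQuasiOrdered_le (α := Fin r → ℕ) (fun i => g i)
  have hlt : mo.lt (g k) (g m) := g.map_rel_iff.2 hmk
  rcases mo.eq_or_lt_of_le hle with h | h
  · exact mo.irrefl _ (h ▸ hlt)
  · exact mo.irrefl _ (mo.trans _ _ _ h hlt)

lemma wlt_coe_of_wle_of_lt {x : WithBot (Fin r → ℕ)} {γ δ : Fin r → ℕ}
    (h : mo.wle x ↑γ) (hlt : mo.lt γ δ) : mo.wlt x ↑δ := by
  rcases h with (⟨hx, -⟩ | ⟨a, b, rfl, hb, hab⟩) | rfl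
  · exact Or.inl ⟨hx, WithBot.coe_ne_bot⟩
  · cases WithBot.coe_injective hb
    exact Or.inr ⟨a, δ, rfl, rfl, mo.trans _ _ _ hab hlt⟩
  · exact Or.inr ⟨γ, δ, rfl, rfl, hlt⟩

lemma eq_bot_or_exists_lt_of_wlt_coe {x : WithBot (Fin r → ℕ)} {δ : Fin r → ℕ}
    (h : mo.wlt x ↑δ) : x = ⊥ ∨ ∃ γ : Fin r → ℕ, x = ↑γ ∧ mo.lt γ δ := by
  rcases h with ⟨hx, -⟩ | ⟨a, b, rfl, hb, hab⟩
  · exact Or.inl hx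
  · cases WithBot.coe_injective hb
    exact Or.inr ⟨a, rfl, hab⟩

end MonOrd

section Jumps

variable {Fq R : Type*} [Field Fq] [CommRing R] [Algebra Fq R] {r n : ℕ}
  (W : WeightFunction Fq R r) (φ : R → Fin n → Fq)

lemma WeightFunction.ne_zero_of_rho_eq_coe {h : R} {δ : Fin r → ℕ} (hδ : W.rho h = ↑δ) :
    h ≠ 0 :=
  mt (W.W0 h).mpr (by rw [hδ]; exact WithBot.coe_ne_bot)

lemma WeightFunction.mem_Γ_of_rho_eq_coe {h : R} {δ : Fin r → ℕ} (hδ : W.rho h = ↑δ) :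
    δ ∈ W.Γ := by
  obtain ⟨γ, hγΓ, hγ⟩ := W.mem_Γ h (by rw [hδ]; exact WithBot.coe_ne_bot)
  rwa [WithBot.coe_injective (hδ.symm.trans hγ)]

lemma image_Rsub_subset_of_lt {γ δ : Fin r → ℕ} (hγδ : W.mo.lt γ δ) :
    φ '' Rsub W γ ⊆ φ '' Rsub W δ :=
  Set.image_mono fun _ hx => Or.inl (W.mo.wlt_coe_of_wle_of_lt hx hγδ)

lemma exists_lt_image_Rsub_subset_of_not_isJump {δ : Fin r → ℕ} (hδ : δ ∈ W.Γ)
    (hnot : ¬ IsJump W φ δ) :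
    ∃ γ, W.mo.lt γ δ ∧ φ '' Rsub W δ ⊆ φ '' Rsub W γ := by
  simp only [IsJump, hδ, true_and, not_forall] at hnot
  obtain ⟨γ, -, hγδ, hnss⟩ := hnot
  refine ⟨γ, hγδ, ?_⟩
  by_contra hc
  exact hnss ((image_Rsub_subset_of_lt W φ hγδ).ssubset_of_not_subset hc)

variable {W φ} (hφlin : IsLinearMap Fq φ) {M : Submodule Fq (Fin n → Fq)}
include hφlin

lemma map_mem_of_wlt_of_forall_lt {δ : Fin r → ℕ}
    (IH : ∀ γ, W.mo.lt γ δ → ∀ h, W.rho h = ↑γ → φ h ∈ M)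
    {h : R} (hlt : W.mo.wlt (W.rho h) ↑δ) : φ h ∈ M := by
  rcases W.mo.eq_bot_or_exists_lt_of_wlt_coe hlt with hbot | ⟨γ, hγ, hγδ⟩
  · rw [(W.W0 h).mp hbot, hφlin.map_zero]
    exact M.zero_mem
  · exact IH γ hγδ h hγ

lemma map_mem_span_of_forall_isJump {α : Fin n → Fin r → ℕ}
    (hcompl : ∀ η, IsJump W φ η → ∃ i, α i = η)
    {f : Fin n → R} (hf : ∀ i, W.rho (f i) = ↑(α i)) (h : R) :
    φ h ∈ Submodule.span Fq (Set.range fun i => φ (f i)) := by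
  set M := Submodule.span Fq (Set.range fun i => φ (f i))
  suffices key : ∀ (δ : Fin r → ℕ) h, W.rho h = ↑δ → φ h ∈ M by
    by_cases hh : h = 0
    · rw [hh, hφlin.map_zero]
      exact M.zero_mem
    · obtain ⟨δ, -, hδ⟩ := W.mem_Γ h fun hb => hh ((W.W0 h).mp hb)
      exact key δ h hδ
  intro δ
  induction δ using W.mo.wellFounded.induction with
  | _ δ IH =>
  intro h hδ
  by_cases hj : ∃ j, α j = δ
  · obtain ⟨j, rfl⟩ := hj
    obtain ⟨a, -, hlt⟩ := W.W4 h (f j) (W.ne_zero_of_rho_eq_coe hδ)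
      (W.ne_zero_of_rho_eq_coe (hf j)) (hδ.trans (hf j).symm)
    have hsplit : φ h = φ (h - a • f j) + a • φ (f j) := by
      rw [hφlin.map_sub, hφlin.map_smul, sub_add_cancel]
    rw [hsplit]
    refine M.add_mem ?_ (M.smul_mem a (Submodule.subset_span ⟨j, rfl⟩))
    exact map_mem_of_wlt_of_forall_lt hφlin IH (hf j ▸ hlt)
  · obtain ⟨γ, hγδ, hsub⟩ := exists_lt_image_Rsub_subset_of_not_isJump W φ
      (W.mem_Γ_of_rho_eq_coe hδ) fun hJ => hj (hcompl δ hJ)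
    obtain ⟨h', hh', hφh⟩ := hsub ⟨h, Or.inr hδ, rfl⟩
    rw [← hφh]
    rcases hh' with hlt | heq
    · exact map_mem_of_wlt_of_forall_lt hφlin IH (W.mo.wlt_coe_of_wle_of_lt (Or.inl hlt) hγδ)
    · exact IH γ hγδ h' heq

end Jumps

theorem stmt13_general {Fq R : Type*} [Field Fq] [CommRing R] [Algebra Fq R] {r n : ℕ}
    (W : WeightFunction Fq R r) (φ : R → Fin n → Fq)
    (hφsurj : Function.Surjective φ) (hφlin : IsLinearMap Fq φ)
    (α : Fin n → Fin r → ℕ)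
    (hcompl : ∀ η : Fin r → ℕ, IsJump W φ η → ∃ i : Fin n, α i = η)
    (f : Fin n → R) (hf : ∀ i : Fin n, W.rho (f i) = ↑(α i)) :
    LinearIndependent Fq (fun i : Fin n => φ (f i)) ∧
    Submodule.span Fq (Set.range fun i : Fin n => φ (f i)) = ⊤ := by
  have hspan : Submodule.span Fq (Set.range fun i : Fin n => φ (f i)) = ⊤ := by
    refine eq_top_iff.mpr fun v _ => ?_
    obtain ⟨h, rfl⟩ := hφsurj v
    exact map_mem_span_of_forall_isJump hφlin hcompl hf h
  refine ⟨linearIndependent_of_top_le_span_of_card_eq_finrank hspan.ge ?_, hspan⟩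
  simp only [Fintype.card_fin, Module.finrank_fin_fun]

theorem stmt13 {Fq R : Type*} [Field Fq] [CommRing R] [Algebra Fq R] {r n : ℕ}
    (W : WeightFunction Fq R r) (φ : R → Fin n → Fq)
    (hφsurj : Function.Surjective φ) (hφlin : IsLinearMap Fq φ)
    (hφmul : ∀ f g : R, φ (f * g) = φ f * φ g)
    (α : Fin n → Fin r → ℕ)
    (hα0 : ∀ h0 : 0 < n, α ⟨0, h0⟩ = 0)
    (hmono : ∀ i j : Fin n, i < j → W.mo.lt (α i) (α j))
    (hjump : ∀ i : Fin n, IsJump W φ (α i))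
    (hcompl : ∀ η : Fin r → ℕ, IsJump W φ η → ∃ i : Fin n, α i = η)
    (f : Fin n → R) (hf : ∀ i : Fin n, W.rho (f i) = ↑(α i)) :
    LinearIndependent Fq (fun i : Fin n => φ (f i)) ∧
    Submodule.span Fq (Set.range fun i : Fin n => φ (f i)) = ⊤ :=
  stmt13_general W φ hφsurj hφlin α hcompl f hf
end

section
/- Let G = {g_1,...,g_n} and H = {h_1,...,h_n} be bases of F_q^n satisfying the weaker condition g_i · h_{n-i+1} ≠ 0 and g_i · h_j = 0 for j < n−i+1. Then for any nonzero v in F_q^n, ρ̄_G(v) = max{k : v · h_{n-k+1} ≠ 0}, and for I = {1,...,k} one has C(G,I) = C^⊥(H, Ī) where Ī = {1,...,n−k}. -/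
/-!
Expand `v = ∑ cᵢ gᵢ` and let `m` be the largest index with `c_m ≠ 0`. The pairing matrix
`gᵢ ⬝ᵥ hⱼ` vanishes above the antidiagonal and is nonzero on it, so `v ⬝ᵥ hⱼ = 0` for
`j < n - 1 - m` while `v ⬝ᵥ h_{n-1-m} = c_m (g_m ⬝ᵥ h_{n-1-m}) ≠ 0`. Hence `v` lies in the span of
the first `k` vectors of `G` exactly when it is orthogonal to the first `n - k` vectors of `H`;
both claims follow, the first because `ρ̄_G(v)` is the least such `k`.
-/

theorem forall_mem_span_dotProduct_eq_zero_iff {R ι : Type*} [CommSemiring R] [Fintype ι]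
    {s : Set (ι → R)} {v : ι → R} :
    (∀ w ∈ Submodule.span R s, v ⬝ᵥ w = 0) ↔ ∀ w ∈ s, v ⬝ᵥ w = 0 :=
  Submodule.span_le (p := LinearMap.ker (dotProductBilin R R v))

theorem dotProduct_eq_zero_of_mem_span {R ι : Type*} [CommSemiring R] [Fintype ι]
    {s : Set (ι → R)} {v w : ι → R} (hs : ∀ u ∈ s, u ⬝ᵥ w = 0)
    (hv : v ∈ Submodule.span R s) : v ⬝ᵥ w = 0 := by
  rw [dotProduct_comm]
  exact forall_mem_span_dotProduct_eq_zero_iff.2 (fun u hu => by rw [dotProduct_comm, hs u hu]) v hv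

section AntiTriangular

variable {F : Type*} [Field F] {n : ℕ}

theorem dotProduct_rev_eq_repr_mul (B : Module.Basis (Fin n) F (Fin n → F))
    {h : Fin n → Fin n → F}
    (hw2 : ∀ i j : Fin n, (i : ℕ) + (j : ℕ) + 1 < n → B i ⬝ᵥ h j = 0)
    {v : Fin n → F} {m : Fin n} (hm : ∀ i, m < i → B.repr v i = 0) :
    v ⬝ᵥ h m.rev = B.repr v m * (B m ⬝ᵥ h m.rev) := by
  conv_lhs => rw [← B.sum_repr v]
  simp only [sum_dotProduct, smul_dotProduct, smul_eq_mul]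
  refine Finset.sum_eq_single m (fun i _ him => ?_) (by simp)
  rcases lt_or_gt_of_ne him with hlt | hgt
  · rw [hw2 i m.rev (by simp only [Fin.val_rev]; omega), mul_zero]
  · rw [hm i hgt, zero_mul]

theorem mem_span_of_forall_dotProduct_eq_zero {g h : Fin n → Fin n → F} (hg : IsBasisFam F g)
    (hw1 : ∀ i j : Fin n, (i : ℕ) + (j : ℕ) + 1 = n → g i ⬝ᵥ h j ≠ 0)
    (hw2 : ∀ i j : Fin n, (i : ℕ) + (j : ℕ) + 1 < n → g i ⬝ᵥ h j = 0)
    {k : ℕ} {v : Fin n → F} (hv : ∀ j : Fin n, (j : ℕ) < n - k → v ⬝ᵥ h j = 0) :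
    v ∈ Submodule.span F (g '' {i : Fin n | (i : ℕ) < k}) := by
  set B := Module.Basis.mk hg.1 hg.2.ge
  have hB : ⇑B = g := funext (Module.Basis.mk_apply hg.1 hg.2.ge)
  rw [← hB, B.mem_span_image]
  intro i hi
  by_contra hik
  let m := (B.repr v).support.max' ⟨i, hi⟩
  have hkm : k ≤ m :=
    (not_lt.1 hik).trans (Fin.le_iff_val_le_val.1 ((B.repr v).support.le_max' i hi))
  have hm : ∀ i', m < i' → B.repr v i' = 0 := fun i' hi' =>
    Finsupp.notMem_support_iff.1 fun hmem => (not_le.2 hi') ((B.repr v).support.le_max' i' hmem)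
  have hcm : B.repr v m ≠ 0 := Finsupp.mem_support_iff.1 ((B.repr v).support.max'_mem _)
  have hpair : B m ⬝ᵥ h m.rev ≠ 0 := by
    rw [hB]; exact hw1 m m.rev (by simp only [Fin.val_rev]; omega)
  have hzero := hv m.rev (by simp only [Fin.val_rev]; omega)
  rw [dotProduct_rev_eq_repr_mul B (by rw [hB]; exact hw2) hm] at hzero
  exact mul_ne_zero hcm hpair hzero

theorem mem_span_iff_forall_dotProduct_eq_zero {g h : Fin n → Fin n → F} (hg : IsBasisFam F g)
    (hw1 : ∀ i j : Fin n, (i : ℕ) + (j : ℕ) + 1 = n → g i ⬝ᵥ h j ≠ 0)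
    (hw2 : ∀ i j : Fin n, (i : ℕ) + (j : ℕ) + 1 < n → g i ⬝ᵥ h j = 0) (k : ℕ) (v : Fin n → F) :
    v ∈ Submodule.span F (g '' {i : Fin n | (i : ℕ) < k}) ↔
      ∀ j : Fin n, (j : ℕ) < n - k → v ⬝ᵥ h j = 0 :=
  ⟨fun hv j hj => dotProduct_eq_zero_of_mem_span
      (by rintro _ ⟨i, hi : (i : ℕ) < k, rfl⟩; exact hw2 i j (by omega)) hv,
    mem_span_of_forall_dotProduct_eq_zero hg hw1 hw2⟩

theorem rho_eq_sSup {g h : Fin n → Fin n → F} (hg : IsBasisFam F g)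
    (hw1 : ∀ i j : Fin n, (i : ℕ) + (j : ℕ) + 1 = n → g i ⬝ᵥ h j ≠ 0)
    (hw2 : ∀ i j : Fin n, (i : ℕ) + (j : ℕ) + 1 < n → g i ⬝ᵥ h j = 0)
    {v : Fin n → F} (hv : v ≠ 0) :
    rho F g v = sSup {k : ℕ | ∃ j : Fin n, k = n - (j : ℕ) ∧ v ⬝ᵥ h j ≠ 0} := by
  set S := {k : ℕ | ∃ j : Fin n, k = n - (j : ℕ) ∧ v ⬝ᵥ h j ≠ 0}
  have hspan : {l | v ∈ Lspan F g l} = upperBounds S := by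
    ext l
    simp only [Lspan, mem_span_iff_forall_dotProduct_eq_zero hg hw1 hw2, Set.mem_ofPred_eq,
      mem_upperBounds, S, forall_exists_index, and_imp]
    refine ⟨fun hl x j hx hj => ?_, fun hl j hj => ?_⟩
    · by_contra! hlt
      exact hj (hl j (by omega))
    · by_contra hj'
      have := hl _ j rfl hj'
      omega
  have hne : S.Nonempty := by
    by_contra! hS
    refine hv ((Submodule.mem_bot F).1 ?_)
    have : 0 ∈ {l | v ∈ Lspan F g l} := by
      rw [hspan, hS, upperBounds_empty]
      trivial
    simpa [Lspan] using this
  have hbdd : BddAbove S := ⟨n, by rintro _ ⟨j, rfl, -⟩; omega⟩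
  rw [rho, hspan, csInf_upperBounds_eq_csSup hbdd hne]

end AntiTriangular

theorem stmt16_general {F : Type*} [Field F] {n : ℕ} (g h : Fin n → Fin n → F)
    (hg : IsBasisFam F g)
    (hw1 : ∀ i j : Fin n, (i : ℕ) + (j : ℕ) + 1 = n → dotProduct (g i) (h j) ≠ 0)
    (hw2 : ∀ i j : Fin n, (i : ℕ) + (j : ℕ) + 1 < n → dotProduct (g i) (h j) = 0) :
    (∀ v : Fin n → F, v ≠ 0 →
      rho F g v =
        sSup {k : ℕ | ∃ j : Fin n, k = n - (j : ℕ) ∧ dotProduct v (h j) ≠ 0}) ∧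
    ∀ k : ℕ, k ≤ n → ∀ v : Fin n → F,
      v ∈ Submodule.span F (g '' {i : Fin n | (i : ℕ) < k}) ↔
        ∀ w ∈ Submodule.span F (h '' {l : Fin n | (l : ℕ) < n - k}),
          dotProduct v w = 0 := by
  refine ⟨fun v hv => rho_eq_sSup hg hw1 hw2 hv, fun k _ v => ?_⟩
  rw [mem_span_iff_forall_dotProduct_eq_zero hg hw1 hw2, forall_mem_span_dotProduct_eq_zero_iff,
    Set.forall_mem_image]
  rfl

theorem stmt16 {F : Type*} [Field F] {n : ℕ} (g h : Fin n → Fin n → F)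
    (hg : IsBasisFam F g) (hh : IsBasisFam F h)
    (hw1 : ∀ i j : Fin n, (i : ℕ) + (j : ℕ) + 1 = n → dotProduct (g i) (h j) ≠ 0)
    (hw2 : ∀ i j : Fin n, (i : ℕ) + (j : ℕ) + 1 < n → dotProduct (g i) (h j) = 0) :
    (∀ v : Fin n → F, v ≠ 0 →
      rho F g v =
        sSup {k : ℕ | ∃ j : Fin n, k = n - (j : ℕ) ∧ dotProduct v (h j) ≠ 0}) ∧
    ∀ k : ℕ, k ≤ n → ∀ v : Fin n → F,
      v ∈ Submodule.span F (g '' {i : Fin n | (i : ℕ) < k}) ↔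
        ∀ w ∈ Submodule.span F (h '' {l : Fin n | (l : ℕ) < n - k}),
          dotProduct v w = 0 :=
  stmt16_general g h hg hw1 hw2
end
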